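/- arXiv:1301.0497 — 3 statements merged into one kernel-verified Lean document; each statement's English description precedes it below -/
import Mathlib

section
/- Let π be an irreducible finite-dimensional ℂ[J]-module with π(e_U)π(e_V) ≠ 0. Then, as linear operators on π, π(e_U)·π(e_V)·π(e_U) = (dim π^U / dim π) · π(e_U), where π^U is the subspace of U-fixed vectors of π. -/
open scoped BigOperators

set_option maxHeartbeats 1000000
set_option synthInstance.maxHeartbeats 1000000

noncomputable section

namespace Parahoric

variable {G : Type*} [Group G]

/-- An Iwahori decomposition of the subgroup `I` of `G` as `I = W·M·W̄`:
`M` normalizes `W` and `W̄`, and the multiplication map `W × M × W̄ → I` is a bijection. -/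
def IwahoriDecomp (I W M Wb : Subgroup G) : Prop :=
  M ≤ Subgroup.normalizer (W : Set G) ∧ M ≤ Subgroup.normalizer (Wb : Set G) ∧
    Set.BijOn (fun q : G × G × G => q.1 * q.2.1 * q.2.2)
      ((W : Set G) ×ˢ (M : Set G) ×ˢ (Wb : Set G)) (I : Set G)

/-- The averaging idempotent `e_H = |H|⁻¹ ∑_{h ∈ H} h` in the group algebra `ℂ[G]`. -/
def algAvg (H : Subgroup G) [Finite H] : MonoidAlgebra ℂ G :=
  letI : Fintype H := Fintype.ofFinite H
  (Nat.card H : ℂ)⁻¹ • ∑ h : H, MonoidAlgebra.of ℂ G (h : G)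

/-- The canonical algebra embedding `ℂ[L] → ℂ[G]` for a subgroup `L ≤ G`. -/
def algMap (L : Subgroup G) : MonoidAlgebra ℂ ↥L →ₐ[ℂ] MonoidAlgebra ℂ G :=
  MonoidAlgebra.mapDomainAlgHom ℂ ℂ L.subtype

/-- `ℂ[G]·e`, the range of right multiplication by `e` on the group algebra. -/
def ralg (G : Type*) [Group G] (e : MonoidAlgebra ℂ G) : Submodule ℂ (MonoidAlgebra ℂ G) :=
  LinearMap.range (LinearMap.mulRight ℂ e)

section Reps

variable {W W₁ W₂ : Type*} [AddCommGroup W] [Module ℂ W]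
  [AddCommGroup W₁] [Module ℂ W₁] [AddCommGroup W₂] [Module ℂ W₂]

/-- A ℂ-submodule is stable under a representation. -/
def Stable (π : Representation ℂ G W) (S : Submodule ℂ W) : Prop :=
  ∀ g : G, ∀ x ∈ S, π g x ∈ S

/-- Irreducibility of a representation (equivalently, simplicity of the corresponding
`ℂ[G]`-module): the space is nonzero and has no nontrivial invariant subspaces. -/
def IsIrreducible (π : Representation ℂ G W) : Prop :=
  (⊤ : Submodule ℂ W) ≠ ⊥ ∧
    ∀ T : Submodule ℂ W, Stable π T → T = ⊥ ∨ T = ⊤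

/-- Irreducibility of an invariant subspace `S` of an ambient representation. -/
def IsIrreducibleSub (π : Representation ℂ G W) (S : Submodule ℂ W) : Prop :=
  S ≠ ⊥ ∧ ∀ T : Submodule ℂ W, T ≤ S → Stable π T → T = ⊥ ∨ T = S

/-- The space `Hom_G(ρ, τ)` of intertwining operators. -/
def repHom (ρ : Representation ℂ G W₁) (τ : Representation ℂ G W₂) :
    Submodule ℂ (W₁ →ₗ[ℂ] W₂) where
  carrier := {φ | ∀ (g : G) (x : W₁), φ (ρ g x) = τ g (φ x)}
  add_mem' := by
    intro φ ψ hφ hψ g x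
    simp [hφ g x, hψ g x]
  zero_mem' := by intro g x; simp
  smul_mem' := by
    intro c φ hφ g x
    simp [hφ g x]

/-- `Hom_G(ρ, τ|_T)` where the target is an invariant subspace `T` of `τ`. -/
def homFullSub (ρ : Representation ℂ G W₁) (τ : Representation ℂ G W₂)
    (T : Submodule ℂ W₂) : Submodule ℂ (W₁ →ₗ[ℂ] ↥T) where
  carrier := {φ | ∀ (g : G) (x : W₁), (φ (ρ g x) : W₂) = τ g ↑(φ x)}
  add_mem' := by
    intro φ ψ hφ hψ g x
    simp [hφ g x, hψ g x]
  zero_mem' := by intro g x; simp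
  smul_mem' := by
    intro c φ hφ g x
    simp [hφ g x]

/-- `Hom_G(ρ|_S, τ)` where the source is an invariant subspace `S` of `ρ`. -/
def homSubFull (ρ : Representation ℂ G W₁) (S : Submodule ℂ W₁)
    (τ : Representation ℂ G W₂) : Submodule ℂ (↥S →ₗ[ℂ] W₂) where
  carrier := {φ | ∀ (g : G) (x : S) (hx : ρ g ↑x ∈ S), φ ⟨ρ g ↑x, hx⟩ = τ g (φ x)}
  add_mem' := by
    intro φ ψ hφ hψ g x hx
    simp [hφ g x hx, hψ g x hx]
  zero_mem' := by intro g x hx; simp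
  smul_mem' := by
    intro c φ hφ g x hx
    simp [hφ g x hx]

/-- `Hom_G(ρ|_S, τ|_T)` between invariant subspaces. -/
def homSubSub (ρ : Representation ℂ G W₁) (S : Submodule ℂ W₁)
    (τ : Representation ℂ G W₂) (T : Submodule ℂ W₂) : Submodule ℂ (↥S →ₗ[ℂ] ↥T) where
  carrier := {φ | ∀ (g : G) (x : S) (hx : ρ g ↑x ∈ S), (φ ⟨ρ g ↑x, hx⟩ : W₂) = τ g ↑(φ x)}
  add_mem' := by
    intro φ ψ hφ hψ g x hx
    simp [hφ g x hx, hψ g x hx]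
  zero_mem' := by intro g x hx; simp
  smul_mem' := by
    intro c φ hφ g x hx
    simp [hφ g x hx]

/-- Isomorphism of representations. -/
def IsoRep (ρ : Representation ℂ G W₁) (τ : Representation ℂ G W₂) : Prop :=
  ∃ e : W₁ ≃ₗ[ℂ] W₂, ∀ (g : G) (x : W₁), e (ρ g x) = τ g (e x)

/-- Equivariant isomorphism from a representation onto an invariant subspace. -/
def IsoFullSub (ρ : Representation ℂ G W₁) (τ : Representation ℂ G W₂)
    (T : Submodule ℂ W₂) : Prop :=
  ∃ e : W₁ ≃ₗ[ℂ] ↥T, ∀ (g : G) (x : W₁), (e (ρ g x) : W₂) = τ g ↑(e x)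

/-- Equivariant isomorphism from an invariant subspace onto a representation. -/
def IsoSubFull (ρ : Representation ℂ G W₁) (S : Submodule ℂ W₁)
    (τ : Representation ℂ G W₂) : Prop :=
  ∃ e : ↥S ≃ₗ[ℂ] W₂, ∀ (g : G) (x : S) (hx : ρ g ↑x ∈ S), e ⟨ρ g ↑x, hx⟩ = τ g (e x)

/-- Equivariant isomorphism between invariant subspaces. -/
def IsoSubSub (ρ : Representation ℂ G W₁) (S : Submodule ℂ W₁)
    (τ : Representation ℂ G W₂) (T : Submodule ℂ W₂) : Prop :=
  ∃ e : ↥S ≃ₗ[ℂ] ↥T, ∀ (g : G) (x : S) (hx : ρ g ↑x ∈ S),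
    (e ⟨ρ g ↑x, hx⟩ : W₂) = τ g ↑(e x)

/-- The operator `π(e_H) = |H|⁻¹ ∑_{h ∈ H} π(h)`. -/
def avgMap (π : Representation ℂ G W) (H : Subgroup G) [Finite H] : W →ₗ[ℂ] W :=
  letI : Fintype H := Fintype.ofFinite H
  (Nat.card H : ℂ)⁻¹ • ∑ h : H, π (h : G)

/-- The subspace `W^H` of `H`-fixed vectors. -/
def fixedSub (π : Representation ℂ G W) (H : Subgroup G) : Submodule ℂ W where
  carrier := {w | ∀ h ∈ H, π h w = w}
  add_mem' := by
    intro a b ha hb h hh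
    simp [ha h hh, hb h hh]
  zero_mem' := by intro h hh; simp
  smul_mem' := by
    intro c a ha h hh
    simp [ha h hh]

/-- Restriction of a representation to a subgroup. -/
def resRep (π : Representation ℂ G W) (L : Subgroup G) : Representation ℂ ↥L W :=
  π.comp L.subtype

/-- The right-translation representation of `G` on the function space `G → W`. -/
def rtRep (G : Type*) [Group G] (W : Type*) [AddCommGroup W] [Module ℂ W] :
    Representation ℂ G (G → W) where
  toFun g :=
    { toFun := fun f x => f (x * g)
      map_add' := fun _ _ => rfl
      map_smul' := fun _ _ => rfl }
  map_one' := LinearMap.ext fun f => funext fun x => by simp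
  map_mul' := fun g₁ g₂ => LinearMap.ext fun f => funext fun x => by
    simp [mul_assoc]

/-- The left-translation representation of `G` on the function space `G → W`. -/
def ltRep (G : Type*) [Group G] (W : Type*) [AddCommGroup W] [Module ℂ W] :
    Representation ℂ G (G → W) where
  toFun g :=
    { toFun := fun f x => f (g⁻¹ * x)
      map_add' := fun _ _ => rfl
      map_smul' := fun _ _ => rfl }
  map_one' := LinearMap.ext fun f => funext fun x => by simp
  map_mul' := fun g₁ g₂ => LinearMap.ext fun f => funext fun x => by
    simp [mul_assoc]

/-- Left translation by a fixed group element, as a linear operator on `G → W`. -/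
def lTrans (W : Type*) [AddCommGroup W] [Module ℂ W] (g : G) : (G → W) →ₗ[ℂ] (G → W) where
  toFun f := fun x => f (g * x)
  map_add' := fun _ _ => rfl
  map_smul' := fun _ _ => rfl

/-- The averaging operator `I_U : f ↦ (j ↦ |U|⁻¹ ∑_{u ∈ U} f(u·j))` on `G → W`. -/
def avgL (U : Subgroup G) [Finite U] (W : Type*) [AddCommGroup W] [Module ℂ W] :
    (G → W) →ₗ[ℂ] (G → W) :=
  letI : Fintype U := Fintype.ofFinite U
  (Nat.card U : ℂ)⁻¹ • ∑ u : U, lTrans W (u : G)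

/-- The module `Ind_{LU}^G (infl_L^{LU} ρ)` of functions `f : G → W` with
`f(u·l·g) = ρ(l)·f(g)` for `u ∈ U`, `l ∈ L`; `G` acts by right translation (`rtRep`).
This is the standard concrete model of `ℂ[G]·e_U ⊗_{ℂ[L]} ρ`. -/
def indInfl (U L : Subgroup G) {W : Type*} [AddCommGroup W] [Module ℂ W]
    (ρ : Representation ℂ ↥L W) : Submodule ℂ (G → W) where
  carrier := {f | ∀ (u l g : G) (hu : u ∈ U) (hl : l ∈ L),
    f (u * l * g) = ρ ⟨l, hl⟩ (f g)}
  add_mem' := by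
    intro f₁ f₂ h₁ h₂ u l g hu hl
    simp [h₁ u l g hu hl, h₂ u l g hu hl]
  zero_mem' := by intro u l g hu hl; simp
  smul_mem' := by
    intro c f hf u l g hu hl
    simp [hf u l g hu hl]

/-- Parahoric induction `i_{U,V} ρ = ℂ[G]e_V e_U ⊗_{ℂ[L]} ρ`, realized concretely as the
image of the averaging operator `I_U` on `Ind_{LV}^G (infl ρ)`; `G` acts by `rtRep`. -/
def parInd (U L V : Subgroup G) [Finite U] {W : Type*} [AddCommGroup W] [Module ℂ W]
    (ρ : Representation ℂ ↥L W) : Submodule ℂ (G → W) :=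
  (indInfl V L ρ).map (avgL U W)

/-- Parahoric restriction `r_{U,V} π`: the image of the operator `π(e_U)·π(e_V)`. -/
def parRes (π : Representation ℂ G W) (U V : Subgroup G) [Finite U] [Finite V] :
    Submodule ℂ W :=
  LinearMap.range (avgMap π U ∘ₗ avgMap π V)

/-- Conjugation `l ↦ w·l·w⁻¹` as an endomorphism of a subgroup `L` normalized by `w`. -/
def conjHom (L : Subgroup G) (w : G) (hw : ∀ l ∈ L, w * l * w⁻¹ ∈ L) : ↥L →* ↥L where
  toFun l := ⟨w * ↑l * w⁻¹, hw ↑l l.2⟩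
  map_one' := by ext; simp
  map_mul' := fun a b => by ext; simp [mul_assoc]

/-- External direct sum of two representations of the same group. -/
def pairRep (ρ : Representation ℂ G W₁) (τ : Representation ℂ G W₂) :
    Representation ℂ G (W₁ × W₂) where
  toFun g := (ρ g).prodMap (τ g)
  map_one' := by ext x <;> simp
  map_mul' := fun g₁ g₂ => by ext x <;> simp

/-- The induced module `ℂ[G] ⊗_{ℂ[J]} W` (for `J ≤ G` of finite index this is all of the
induced module; in general, its "compactly induced" variant is `cInd`): functions
`f : G → W` with `f(g·j) = π(j)⁻¹ f(g)`, the action of `G` being left translation. -/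
def indUp (J : Subgroup G) {W : Type*} [AddCommGroup W] [Module ℂ W]
    (π : Representation ℂ ↥J W) : Submodule ℂ (G → W) where
  carrier := {f | ∀ (g : G) (j : ↥J), f (g * ↑j) = π j⁻¹ (f g)}
  add_mem' := by
    intro f₁ f₂ h₁ h₂ g j
    simp [h₁ g j, h₂ g j]
  zero_mem' := by intro g j; simp
  smul_mem' := by
    intro c f hf g j
    simp [hf g j]

/-- The induced module `ℂ[G] ⊗_{ℂ[J]} W` for an arbitrary subgroup `J` of a (possibly
infinite) group `G`: functions `f : G → W` with `f(g·j) = π(j)⁻¹ f(g)` supported on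
finitely many cosets `g·J`; the action of `G` is left translation (`ltRep`). -/
def cInd (J : Subgroup G) {W : Type*} [AddCommGroup W] [Module ℂ W]
    (π : Representation ℂ ↥J W) : Submodule ℂ (G → W) where
  carrier := {f | (∀ (g : G) (j : ↥J), f (g * ↑j) = π j⁻¹ (f g)) ∧
    ∃ S : Set G, S.Finite ∧ ∀ g : G, f g ≠ 0 → ∃ s ∈ S, ∃ j : ↥J, g = s * ↑j}
  add_mem' := by
    rintro f₁ f₂ ⟨h₁, S₁, hS₁, hS₁'⟩ ⟨h₂, S₂, hS₂, hS₂'⟩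
    refine ⟨fun g j => by simp [h₁ g j, h₂ g j], S₁ ∪ S₂, hS₁.union hS₂, fun g hg => ?_⟩
    by_cases hf₁ : f₁ g = 0
    · have hf₂ : f₂ g ≠ 0 := by
        intro h
        exact hg (by simp [Pi.add_apply, hf₁, h])
      obtain ⟨s, hs, j, hj⟩ := hS₂' g hf₂
      exact ⟨s, Set.mem_union_right _ hs, j, hj⟩
    · obtain ⟨s, hs, j, hj⟩ := hS₁' g hf₁
      exact ⟨s, Set.mem_union_left _ hs, j, hj⟩
  zero_mem' := by
    refine ⟨fun g j => by simp, ∅, Set.finite_empty, fun g hg => absurd rfl hg⟩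
  smul_mem' := by
    rintro c f ⟨h, S, hS, hS'⟩
    refine ⟨fun g j => by simp [h g j], S, hS, fun g hg => ?_⟩
    apply hS'
    intro h0
    exact hg (by simp [Pi.smul_apply, h0])

/-- The space of functions `f : J → ℂ` with `f(b·g) = χ(b)·f(g)`: the concrete model of the
induced representation `Ind_B^J χ` of a one-dimensional character, `J` acting by `rtRep`. -/
def indChar {J : Type*} [Group J] (B : Subgroup J) (χ : ↥B →* ℂˣ) :
    Submodule ℂ (J → ℂ) where
  carrier := {f | ∀ (b : ↥B) (g : J), f (↑b * g) = (χ b : ℂ) * f g}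
  add_mem' := by
    intro f₁ f₂ h₁ h₂ b g
    simp [h₁ b g, h₂ b g, mul_add]
  zero_mem' := by intro b g; simp
  smul_mem' := by
    intro c f hf b g
    simp [hf b g]
    ring

/-- The space `Hom_{J ∩ t⁻¹Jt}(π, π^t)` of linear maps `φ` with
`φ ∘ π(x) = π(t·x·t⁻¹) ∘ φ` for all `x ∈ J ∩ t⁻¹Jt`. -/
def twistedIntertwiners {W : Type*} [AddCommGroup W] [Module ℂ W]
    (J : Subgroup G) (π : Representation ℂ ↥J W) (t : G) :
    Submodule ℂ (W →ₗ[ℂ] W) where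
  carrier := {φ | ∀ (x : G) (hx : x ∈ J) (hx' : t * x * t⁻¹ ∈ J),
    φ ∘ₗ π ⟨x, hx⟩ = π ⟨t * x * t⁻¹, hx'⟩ ∘ₗ φ}
  add_mem' := by
    intro φ ψ hφ hψ x hx hx'
    simp only [LinearMap.add_comp, LinearMap.comp_add, hφ x hx hx', hψ x hx hx']
  zero_mem' := by intro x hx hx'; simp
  smul_mem' := by
    intro c φ hφ x hx hx'
    simp only [LinearMap.smul_comp, LinearMap.comp_smul, hφ x hx hx']

/-- The dimension `dim_ℂ S` of a subspace `S` (e.g. of a space of intertwining maps). -/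
def dimC {M : Type*} [AddCommGroup M] [Module ℂ M] (S : Submodule ℂ M) : ℕ :=
  Module.finrank ℂ ↥S

/-- Finite-dimensionality of a subspace over `ℂ`. -/
def IsFinDimSub {M : Type*} [AddCommGroup M] [Module ℂ M] (S : Submodule ℂ M) : Prop :=
  FiniteDimensional ℂ ↥S

end Reps

/-!
Conjugation-averaging over `J` turns any operator `A` into an intertwiner, hence, by Schur's
lemma, into the scalar `|J| · tr A / dim π`. Writing `j = u l v`, the idempotent `π(e_U)` absorbs
`u`, `l` normalizes `V` and `π(e_V)` absorbs `v`, so `π(e_U) π(j) π(e_V) π(j)⁻¹ π(e_U)` does not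
depend on `j`; averaging gives `π(e_U) π(e_V) π(e_U) = (dim π^V / dim π) π(e_U)`, and by symmetry
`π(e_V) π(e_U) π(e_V) = (dim π^U / dim π) π(e_V)`. Expanding `(π(e_U) π(e_V))²` both ways and using
`π(e_U) π(e_V) ≠ 0` shows that the two scalars agree.
-/

theorem IwahoriDecomp.exists_eq_mul_mul {U L V : Subgroup G} (h : IwahoriDecomp ⊤ U L V)
    (g : G) : ∃ u ∈ U, ∃ l ∈ L, ∃ v ∈ V, g = u * l * v := by
  obtain ⟨⟨u, l, v⟩, ⟨hu, hl, hv⟩, rfl⟩ := h.2.2.2.2 (Set.mem_univ g)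
  exact ⟨u, hu, l, hl, v, hv, rfl⟩

theorem IwahoriDecomp.exists_eq_mul_mul' {U L V : Subgroup G} (h : IwahoriDecomp ⊤ U L V)
    (g : G) : ∃ v ∈ V, ∃ l ∈ L, ∃ u ∈ U, g = v * l * u := by
  obtain ⟨u, hu, l, hl, v, hv, hg⟩ := h.exists_eq_mul_mul g⁻¹
  refine ⟨v⁻¹, V.inv_mem hv, l⁻¹, L.inv_mem hl, u⁻¹, U.inv_mem hu, ?_⟩
  rw [← inv_inv g, hg]
  simp only [mul_inv_rev, mul_assoc]

section Averaging

variable {W : Type*} [AddCommGroup W] [Module ℂ W] {π : Representation ℂ G W}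

theorem avgMap_eq_sum (π : Representation ℂ G W) (H : Subgroup G) [Fintype H] :
    avgMap π H = (Nat.card H : ℂ)⁻¹ • ∑ h : H, π (h : G) := by
  unfold avgMap
  rw [Subsingleton.elim (Fintype.ofFinite H) ‹Fintype H›]

variable {H : Subgroup G} [Finite H]

theorem rep_mul_avgMap {g : G} (hg : g ∈ H) : π g * avgMap π H = avgMap π H := by
  cases nonempty_fintype H
  rw [avgMap_eq_sum, mul_smul_comm, Finset.mul_sum]
  congr 1
  exact Fintype.sum_equiv (Equiv.mulLeft (⟨g, hg⟩ : H)) (fun h => π g * π h) (fun h => π h)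
    fun h => (map_mul π g (h : G)).symm

theorem avgMap_mul_rep {g : G} (hg : g ∈ H) : avgMap π H * π g = avgMap π H := by
  cases nonempty_fintype H
  rw [avgMap_eq_sum, smul_mul_assoc, Finset.sum_mul]
  congr 1
  exact Fintype.sum_equiv (Equiv.mulRight (⟨g, hg⟩ : H)) (fun h => π h * π g) (fun h => π h)
    fun h => (map_mul π (h : G) g).symm

theorem rep_mul_avgMap_mul_rep_inv {g : G} (hg : g ∈ Subgroup.normalizer (H : Set G)) :
    π g * avgMap π H * π g⁻¹ = avgMap π H := by
  cases nonempty_fintype H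
  rw [avgMap_eq_sum, mul_smul_comm, smul_mul_assoc, Finset.mul_sum, Finset.sum_mul]
  congr 1
  refine Fintype.sum_equiv ((MulAut.conj g).toEquiv.subtypeEquiv
    fun h => Subgroup.mem_normalizer_iff.mp hg h) _ _ fun h => ?_
  simp [← map_mul]

theorem isProj_avgMap : LinearMap.IsProj (fixedSub π H) (avgMap π H) := by
  cases nonempty_fintype H
  refine ⟨fun x g hg => LinearMap.congr_fun (rep_mul_avgMap hg) x, fun x hx => ?_⟩
  have hH : (Nat.card H : ℂ) ≠ 0 := by exact_mod_cast Nat.card_pos.ne'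
  rw [avgMap_eq_sum, LinearMap.smul_apply, LinearMap.sum_apply,
    Finset.sum_congr rfl fun h _ => hx _ h.2, Finset.sum_const, Finset.card_univ,
    ← Nat.card_eq_fintype_card, ← Nat.cast_smul_eq_nsmul ℂ, smul_smul, inv_mul_cancel₀ hH,
    one_smul]

theorem avgMap_mul_self : avgMap π H * avgMap π H = avgMap π H :=
  isProj_avgMap.isIdempotentElem

theorem trace_avgMap [FiniteDimensional ℂ W] :
    LinearMap.trace ℂ W (avgMap π H) = Module.finrank ℂ (fixedSub π H) :=
  isProj_avgMap.trace

end Averaging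

section Schur

variable {W : Type*} [AddCommGroup W] [Module ℂ W] {π : Representation ℂ G W}

theorem IsIrreducible.nontrivial (hπ : IsIrreducible π) : Nontrivial W := by
  by_contra h
  rw [not_nontrivial_iff_subsingleton] at h
  exact hπ.1 (Subsingleton.elim _ _)

theorem IsIrreducible.exists_eq_smul_one [FiniteDimensional ℂ W] (hπ : IsIrreducible π)
    {A : Module.End ℂ W} (hA : ∀ g, Commute (π g) A) : ∃ c : ℂ, A = c • 1 := by
  have := hπ.nontrivial
  obtain ⟨c, hc⟩ := Module.End.exists_eigenvalue A
  have hstable : Stable π (Module.End.eigenspace A c) := by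
    intro g x hx
    rw [Module.End.mem_eigenspace_iff] at hx ⊢
    rw [← Module.End.mul_apply, ← (hA g).eq, Module.End.mul_apply, hx, map_smul]
  refine ⟨c, LinearMap.ext fun x => ?_⟩
  have hx : x ∈ Module.End.eigenspace A c :=
    ((hπ.2 _ hstable).resolve_left hc).symm ▸ Submodule.mem_top
  simpa using Module.End.mem_eigenspace_iff.mp hx

theorem IsIrreducible.sum_conj_eq_smul_one [Fintype G] [FiniteDimensional ℂ W]
    (hπ : IsIrreducible π) (A : Module.End ℂ W) :
    ∑ g : G, π g * A * π g⁻¹ =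
      ((Fintype.card G : ℂ) * LinearMap.trace ℂ W A / Module.finrank ℂ W) • 1 := by
  have hcomm : ∀ g, Commute (π g) (∑ g : G, π g * A * π g⁻¹) := fun g => by
    rw [Commute, SemiconjBy, Finset.mul_sum, Finset.sum_mul]
    refine Fintype.sum_equiv (Equiv.mulLeft g) _ _ fun h => ?_
    simp only [Equiv.coe_mulLeft, map_mul, mul_inv_rev, mul_assoc, ← map_mul π g⁻¹ g,
      inv_mul_cancel, map_one, mul_one]
  have htrace_conj : ∀ g, LinearMap.trace ℂ W (π g * A * π g⁻¹) = LinearMap.trace ℂ W A :=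
    fun g => by
      rw [LinearMap.trace_mul_comm, ← mul_assoc, ← map_mul, inv_mul_cancel, map_one, one_mul]
  obtain ⟨c, hc⟩ := hπ.exists_eq_smul_one hcomm
  have := hπ.nontrivial
  have htrace := congrArg (LinearMap.trace ℂ W) hc
  simp only [map_sum, htrace_conj, Finset.sum_const, Finset.card_univ, nsmul_eq_mul, map_smul,
    LinearMap.trace_one, smul_eq_mul] at htrace
  rw [hc, htrace, mul_div_cancel_right₀ _ (by exact_mod_cast Module.finrank_pos.ne')]

end Schur

section Sandwich

variable {W : Type*} [AddCommGroup W] [Module ℂ W] {π : Representation ℂ G W}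
  {U V : Subgroup G} [Finite U] [Finite V]

theorem avgMap_mul_conj_mul_avgMap {u l v : G} (hu : u ∈ U)
    (hl : l ∈ Subgroup.normalizer (V : Set G)) (hv : v ∈ V) :
    avgMap π U * (π (u * l * v) * avgMap π V * π (u * l * v)⁻¹) * avgMap π U =
      avgMap π U * avgMap π V * avgMap π U := by
  have hconj : π (u * l * v) * avgMap π V * π (u * l * v)⁻¹ =
      π u * (π l * (π v * avgMap π V * π v⁻¹) * π l⁻¹) * π u⁻¹ := by
    simp only [map_mul, mul_inv_rev, mul_assoc]
  rw [hconj, rep_mul_avgMap_mul_rep_inv (Subgroup.le_normalizer hv),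
    rep_mul_avgMap_mul_rep_inv hl]
  simp only [← mul_assoc, avgMap_mul_rep hu]
  rw [mul_assoc _ (π u⁻¹), rep_mul_avgMap (U.inv_mem hu)]

theorem avgMap_mul_avgMap_mul_avgMap [Fintype G] [FiniteDimensional ℂ W]
    (hπ : IsIrreducible π)
    (hdec : ∀ g : G, ∃ u ∈ U, ∃ l ∈ Subgroup.normalizer (V : Set G), ∃ v ∈ V, g = u * l * v) :
    avgMap π U * avgMap π V * avgMap π U =
      ((Module.finrank ℂ (fixedSub π V) : ℂ) / Module.finrank ℂ W) • avgMap π U := by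
  have hconj : ∀ g : G, avgMap π U * (π g * avgMap π V * π g⁻¹) * avgMap π U =
      avgMap π U * avgMap π V * avgMap π U := fun g => by
    obtain ⟨u, hu, l, hl, v, hv, rfl⟩ := hdec g
    exact avgMap_mul_conj_mul_avgMap hu hl hv
  have hsum : (Fintype.card G : ℂ) • (avgMap π U * avgMap π V * avgMap π U) =
      ((Fintype.card G : ℂ) * Module.finrank ℂ (fixedSub π V) / Module.finrank ℂ W) •
        avgMap π U :=
    calc (Fintype.card G : ℂ) • (avgMap π U * avgMap π V * avgMap π U)
        = avgMap π U * (∑ g : G, π g * avgMap π V * π g⁻¹) * avgMap π U := by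
          rw [Finset.mul_sum, Finset.sum_mul, Finset.sum_congr rfl fun g _ => hconj g,
            Finset.sum_const, Finset.card_univ, Nat.cast_smul_eq_nsmul]
      _ = _ := by
          rw [hπ.sum_conj_eq_smul_one, mul_smul_comm, smul_mul_assoc, mul_one,
            avgMap_mul_self, trace_avgMap]
  rw [mul_div_assoc, ← smul_smul] at hsum
  exact smul_right_injective _ (by exact_mod_cast Fintype.card_ne_zero) hsum

end Sandwich

theorem eq_of_mul_mul_eq_smul {K A : Type*} [Field K] [Ring A] [Algebra K A]
    {p q : A} {a b : K} (hp : p * q * p = a • p) (hq : q * p * q = b • q) (hpq : p * q ≠ 0) :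
    a = b := by
  have h : a • (p * q) = b • (p * q) := by
    rw [← smul_mul_assoc, ← hp, ← mul_smul_comm, ← hq]
    simp only [mul_assoc]
  exact smul_left_injective K hpq h

section Statement10

variable {J : Type*} [Group J] [Fintype J]

/-- Let `J = ULV` be a finite group with an Iwahori decomposition and `π` an irreducible
finite-dimensional `ℂ[J]`-module with `π(e_U)·π(e_V) ≠ 0`.  Then, as operators on `π`,
`π(e_U)·π(e_V)·π(e_U) = (dim π^U / dim π) · π(e_U)`. -/
theorem avg_sandwich_eq_dim_ratio_smul
    (U L V : Subgroup J) (hIw : IwahoriDecomp (⊤ : Subgroup J) U L V)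
    {W : Type*} [AddCommGroup W] [Module ℂ W] [FiniteDimensional ℂ W]
    (π : Representation ℂ J W) (hπ : IsIrreducible π)
    (hne : avgMap π U ∘ₗ avgMap π V ≠ 0) :
    avgMap π U ∘ₗ avgMap π V ∘ₗ avgMap π U =
      ((Module.finrank ℂ ↥(fixedSub π U) : ℂ) / (Module.finrank ℂ W : ℂ)) •
        avgMap π U := by
  have hUVU := avgMap_mul_avgMap_mul_avgMap hπ (U := U) (V := V) fun g => by
    obtain ⟨u, hu, l, hl, v, hv, hg⟩ := hIw.exists_eq_mul_mul g
    exact ⟨u, hu, l, hIw.2.1 hl, v, hv, hg⟩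
  have hVUV := avgMap_mul_avgMap_mul_avgMap hπ (U := V) (V := U) fun g => by
    obtain ⟨v, hv, l, hl, u, hu, hg⟩ := hIw.exists_eq_mul_mul' g
    exact ⟨v, hv, l, hIw.1 hl, u, hu, hg⟩
  rw [eq_of_mul_mul_eq_smul hUVU hVUV hne] at hUVU
  rw [← LinearMap.comp_assoc]
  exact hUVU

end Statement10


end Parahoric
end
end

section
/- Let p be a prime, c ≥ 1, and let ρ : (ℤ/p^cℤ)ˣ → ℂˣ be a homomorphism that is nontrivial on the kernel of the reduction map (ℤ/p^cℤ)ˣ → (ℤ/p^{c−1}ℤ)ˣ (i.e. ρ has conductor exactly c). Then the induced representation Ind_B^J ρ̂ is an irreducible complex representation of J. -/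
open scoped BigOperators

set_option maxHeartbeats 1000000
set_option synthInstance.maxHeartbeats 1000000

noncomputable section

namespace Parahoric

variable {G : Type*} [Group G]

/-!
Mackey's criterion: `Ind_B^J χ` is irreducible once, for every `x ∈ J ∖ B`, the characters `χ`
and `b ↦ χ (x⁻¹ b x)` differ somewhere on `B ∩ x B x⁻¹`. Indeed, right-averaging a nonzero
vector of an invariant subspace against `χ` produces a nonzero function transforming by `χ` on
both sides; such a function vanishes off `B`, hence is a multiple of `χ` extended by zero, whose
right translates span `Ind_B^J χ`.

For `x = [[α, β], [γ, δ]] ∈ J ∖ B` we have `0 ≠ γ ∈ p·ℤ/p^c`, so `α` is a unit and `γ` divides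
`p^{c-1}`. Choose `z` with `γ z = -α⁻¹ p^{c-1} w`; then `γ² z = 0`, so `x [[1, z], [0, 1]] x⁻¹`
lies in `B` with upper-left entry `1 + p^{c-1} w`, while `[[1, z], [0, 1]]` has upper-left
entry `1`. Since `ρ` has conductor `c`, some `w` makes `ρ (1 + p^{c-1} w) ≠ 1`.
-/

open scoped MatrixGroups

section IndChar

variable {J : Type*} [Group J] {B : Subgroup J} {χ : B →* ℂˣ}

lemma rtRep_apply {W : Type*} [AddCommGroup W] [Module ℂ W] (g : J) (f : J → W) (x : J) :
    rtRep J W g f x = f (x * g) :=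
  rfl

lemma indChar_apply_inv_mul {f : J → ℂ} (hf : f ∈ indChar B χ) (b : B) (y : J) :
    f ((b : J)⁻¹ * y) = (χ b : ℂ)⁻¹ * f y := by
  rw [eq_inv_mul_iff_mul_eq₀ (Units.ne_zero _), ← hf b, mul_inv_cancel_left]

lemma Stable.sum_smul_mem {T : Submodule ℂ (J → ℂ)} (hT : Stable (rtRep J ℂ) T) {ι : Type*}
    (s : Finset ι) (a : ι → ℂ) (g : ι → J) {f : J → ℂ} (hf : f ∈ T) :
    ∑ i ∈ s, a i • rtRep J ℂ (g i) f ∈ T :=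
  T.sum_mem fun _ _ => T.smul_mem _ (hT _ _ hf)

open Classical in
variable (B χ) in
def zeroExtend (x : J) : ℂ :=
  if h : x ∈ B then (χ ⟨x, h⟩ : ℂ) else 0

lemma zeroExtend_of_mem {x : J} (hx : x ∈ B) : zeroExtend B χ x = χ ⟨x, hx⟩ :=
  dif_pos hx

lemma zeroExtend_of_notMem {x : J} (hx : x ∉ B) : zeroExtend B χ x = 0 :=
  dif_neg hx

lemma zeroExtend_one : zeroExtend B χ 1 = 1 := by
  rw [zeroExtend_of_mem B.one_mem]
  exact congrArg Units.val (map_one χ)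

lemma zeroExtend_mem_indChar : zeroExtend B χ ∈ indChar B χ := by
  intro b g
  by_cases hg : g ∈ B
  · rw [zeroExtend_of_mem hg, zeroExtend_of_mem (B.mul_mem b.2 hg)]
    exact congrArg Units.val (map_mul χ b ⟨g, hg⟩)
  · have hbg : (b : J) * g ∉ B := fun h => hg (by simpa using B.mul_mem (B.inv_mem b.2) h)
    rw [zeroExtend_of_notMem hg, zeroExtend_of_notMem hbg, mul_zero]

lemma sum_mul_zeroExtend [Fintype J] [Fintype B] (F : J → ℂ) :
    ∑ u : J, F u * zeroExtend B χ u = ∑ b : B, F b * χ b := by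
  classical
  rw [← Finset.sum_subset (Finset.subset_univ (Finset.univ.map (.subtype (· ∈ B)))),
    Finset.sum_map]
  · exact Finset.sum_congr rfl fun b _ => by
      rw [Function.Embedding.coe_subtype, zeroExtend_of_mem b.2]
  · intro u _ hu
    rw [zeroExtend_of_notMem (by simpa using hu), mul_zero]

lemma card_smul_eq_sum_rtRep_zeroExtend [Fintype J] [Fintype B] {f : J → ℂ}
    (hf : f ∈ indChar B χ) :
    (Fintype.card B : ℂ) • f = ∑ g : J, f g⁻¹ • rtRep J ℂ g (zeroExtend B χ) := by
  funext y
  calc (Fintype.card B : ℂ) • f y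
      = ∑ b : B, f ((b : J)⁻¹ * y) * (χ b : ℂ) := by
        simp [indChar_apply_inv_mul hf, mul_right_comm _ (f y)]
    _ = ∑ u : J, f (u⁻¹ * y) * zeroExtend B χ u :=
        (sum_mul_zeroExtend fun u => f (u⁻¹ * y)).symm
    _ = _ := by
        rw [Finset.sum_apply]
        exact Fintype.sum_equiv (Equiv.mulLeft y⁻¹) _ _ fun u => by
          simp [rtRep_apply, mul_inv_rev]

lemma indChar_le_of_zeroExtend_mem [Finite J] {T : Submodule ℂ (J → ℂ)}
    (hT : Stable (rtRep J ℂ) T) (h : zeroExtend B χ ∈ T) : indChar B χ ≤ T := by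
  have := Fintype.ofFinite J
  have := Fintype.ofFinite B
  intro f hf
  have hcard : (Fintype.card B : ℂ) ≠ 0 := Nat.cast_ne_zero.mpr Fintype.card_ne_zero
  rw [← inv_smul_smul₀ hcard f, card_smul_eq_sum_rtRep_zeroExtend hf]
  exact T.smul_mem _ (hT.sum_smul_mem _ _ _ h)

variable (χ) in
def rightAvg [Fintype B] (f : J → ℂ) : J → ℂ :=
  ∑ b : B, (χ b : ℂ) • rtRep J ℂ (b : J)⁻¹ f

lemma rightAvg_apply [Fintype B] (f : J → ℂ) (x : J) :
    rightAvg χ f x = ∑ b : B, (χ b : ℂ) * f (x * (b : J)⁻¹) := by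
  simp [rightAvg, rtRep_apply]

lemma rightAvg_mem [Fintype B] {T : Submodule ℂ (J → ℂ)} (hT : Stable (rtRep J ℂ) T)
    {f : J → ℂ} (hf : f ∈ T) : rightAvg χ f ∈ T :=
  hT.sum_smul_mem _ _ _ hf

lemma rightAvg_mul_right [Fintype B] (f : J → ℂ) (x : J) (b : B) :
    rightAvg χ f (x * b) = χ b * rightAvg χ f x := by
  simp only [rightAvg_apply, Finset.mul_sum]
  refine (Fintype.sum_equiv (Equiv.mulRight b) _ _ fun b' => ?_).symm
  simp [mul_inv_rev, mul_assoc, mul_comm (χ b : ℂ)]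

lemma rightAvg_one [Fintype B] {f : J → ℂ} (hf : f ∈ indChar B χ) :
    rightAvg χ f 1 = Fintype.card B * f 1 := by
  simp only [rightAvg_apply, one_mul]
  calc ∑ b : B, (χ b : ℂ) * f (b : J)⁻¹
      = ∑ b : B, (χ b : ℂ) * ((χ b : ℂ)⁻¹ * f 1) := by
        simp only [← indChar_apply_inv_mul hf, mul_one]
    _ = Fintype.card B * f 1 := by simp

lemma eq_zero_of_conj_mem {h : J → ℂ} (hh : h ∈ indChar B χ)
    (hright : ∀ (x : J) (b : B), h (x * b) = χ b * h x) {x : J} {b b' : B}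
    (hconj : (b' : J) * x = x * b) (hχ : χ b' ≠ χ b) : h x = 0 := by
  have key : (χ b' : ℂ) * h x = χ b * h x := by rw [← hh, hconj, hright]
  exact (mul_eq_mul_right_iff.mp key).resolve_left fun e => hχ (Units.ext e)

lemma eq_smul_zeroExtend {h : J → ℂ} (hh : h ∈ indChar B χ) (hsupp : ∀ x ∉ B, h x = 0) :
    h = h 1 • zeroExtend B χ := by
  funext x
  by_cases hx : x ∈ B
  · simpa [zeroExtend_of_mem hx, mul_comm] using hh ⟨x, hx⟩ 1
  · simp [hsupp x hx, zeroExtend_of_notMem hx]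

theorem isIrreducibleSub_indChar [Finite J]
    (hχ : ∀ x ∉ B, ∃ b b' : B, (b' : J) * x = x * b ∧ χ b' ≠ χ b) :
    IsIrreducibleSub (rtRep J ℂ) (indChar B χ) := by
  have := Fintype.ofFinite B
  refine ⟨fun hbot => ?_, fun T hTS hT => or_iff_not_imp_left.mpr fun hT0 => ?_⟩
  · have h0 : zeroExtend B χ = 0 := (Submodule.eq_bot_iff _).mp hbot _ zeroExtend_mem_indChar
    simpa [zeroExtend_one] using congrFun h0 1
  obtain ⟨f, hfT, hf0⟩ := (Submodule.ne_bot_iff T).mp hT0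
  obtain ⟨g, hg⟩ : ∃ g, f g ≠ 0 := Function.ne_iff.mp hf0
  set h := rightAvg χ (rtRep J ℂ g f) with h_def
  have hhT : h ∈ T := rightAvg_mem hT (hT g f hfT)
  have hhS : h ∈ indChar B χ := hTS hhT
  have hh1 : h 1 ≠ 0 := by
    rw [h_def, rightAvg_one (hTS (hT g f hfT)), rtRep_apply, one_mul]
    exact mul_ne_zero (Nat.cast_ne_zero.mpr Fintype.card_ne_zero) hg
  have hsupp : ∀ x ∉ B, h x = 0 := fun x hx => by
    obtain ⟨b, b', hconj, hne⟩ := hχ x hx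
    exact eq_zero_of_conj_mem hhS (rightAvg_mul_right _) hconj hne
  have hδT : zeroExtend B χ ∈ T := by
    rw [← inv_smul_smul₀ hh1 (zeroExtend B χ), ← eq_smul_zeroExtend hhS hsupp]
    exact T.smul_mem _ hhT
  exact le_antisymm hTS (indChar_le_of_zeroExtend_mem hT hδT)

end IndChar

section ZModPow

variable {p c : ℕ}

lemma natCast_pow_eq_zero : (p : ZMod (p ^ c)) ^ c = 0 := by
  exact_mod_cast ZMod.natCast_self (p ^ c)

lemma natCast_mul_pow_pred_eq_zero :
    (p : ZMod (p ^ c)) * (p : ZMod (p ^ c)) ^ (c - 1) = 0 := by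
  cases c with
  | zero => exact (ZMod.subsingleton_iff.mpr (pow_zero p)).elim _ _
  | succ c => rw [← pow_succ', Nat.add_sub_cancel, natCast_pow_eq_zero]

lemma isUnit_one_add_natCast_mul (s : ZMod (p ^ c)) : IsUnit (1 + (p : ZMod (p ^ c)) * s) :=
  IsNilpotent.isUnit_one_add <| (Commute.all _ _).isNilpotent_mul_right
    ⟨c, natCast_pow_eq_zero⟩

lemma exists_eq_one_add_mul_of_mem_ker_unitsMap {m n : ℕ} [NeZero n] (h : m ∣ n)
    {x : (ZMod n)ˣ} (hx : x ∈ (ZMod.unitsMap h).ker) :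
    ∃ w : ZMod n, (x : ZMod n) = 1 + m * w := by
  have ha : ((((x : ZMod n) - 1).val : ℕ) : ZMod m) = 0 := by
    have : ZMod.castHom h (ZMod m) x = 1 := congrArg Units.val hx
    rw [← map_natCast (ZMod.castHom h (ZMod m)), ZMod.natCast_zmod_val, map_sub, this, map_one,
      sub_self]
  obtain ⟨k, hk⟩ := (ZMod.natCast_eq_zero_iff _ _).mp ha
  refine ⟨k, ?_⟩
  rw [← sub_eq_iff_eq_add', ← ZMod.natCast_zmod_val (x - 1 : ZMod n), hk]
  push_cast
  ring

variable [Fact p.Prime] [NeZero (p ^ c)]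

lemma exists_mul_eq_pow_pred {γ : ZMod (p ^ c)} (hγ : γ ≠ 0) :
    ∃ z, γ * z = (p : ZMod (p ^ c)) ^ (c - 1) := by
  have hp : p.Prime := Fact.out
  have hval : γ.val ≠ 0 := (ZMod.val_ne_zero γ).mpr hγ
  obtain ⟨k, m, hpm, hkm⟩ := Nat.exists_eq_pow_mul_and_not_dvd hval p hp.ne_one
  have hkc : k < c := by
    refine (Nat.pow_lt_pow_iff_right hp.one_lt).mp (lt_of_le_of_lt ?_ (ZMod.val_lt γ))
    exact Nat.le_of_dvd (Nat.pos_of_ne_zero hval) ⟨m, hkm⟩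
  have hm : IsUnit (m : ZMod (p ^ c)) :=
    (ZMod.isUnit_iff_coprime m _).mpr (((hp.coprime_iff_not_dvd).mpr hpm).symm.pow_right c)
  refine ⟨p ^ (c - 1 - k) * hm.unit⁻¹, ?_⟩
  rw [← ZMod.natCast_zmod_val γ, hkm]
  push_cast
  calc (p : ZMod (p ^ c)) ^ k * m * (p ^ (c - 1 - k) * hm.unit⁻¹)
      = p ^ (k + (c - 1 - k)) * (m * hm.unit⁻¹) := by ring
    _ = p ^ (c - 1) := by rw [IsUnit.mul_val_inv, mul_one, Nat.add_sub_cancel' (by omega)]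

end ZModPow

section SL2

variable {R : Type*} [CommRing R]

def upperUnipotent (z : R) : SL(2, R) :=
  ⟨!![1, z; 0, 1], by simp [Matrix.det_fin_two_of]⟩

lemma coe_upperUnipotent (z : R) :
    (upperUnipotent z : Matrix (Fin 2) (Fin 2) R) = !![1, z; 0, 1] :=
  rfl

lemma det_fin_two_eq_one (X : SL(2, R)) : X 0 0 * X 1 1 - X 0 1 * X 1 0 = 1 := by
  rw [← Matrix.det_fin_two]; exact X.det_coe

lemma conj_upperUnipotent_apply_one_zero (X : SL(2, R)) (z : R) :
    (X * upperUnipotent z * X⁻¹) 1 0 = -(X 1 0 * X 1 0 * z) := by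
  simp only [Matrix.SpecialLinearGroup.coe_mul, Matrix.SpecialLinearGroup.coe_inv,
    coe_upperUnipotent, Matrix.adjugate_fin_two, Matrix.mul_apply, Fin.sum_univ_two,
    Matrix.of_apply, Matrix.cons_val', Matrix.cons_val_fin_one, Matrix.cons_val_zero,
    Matrix.cons_val_one]
  ring

lemma conj_upperUnipotent_apply_zero_zero (X : SL(2, R)) (z : R) :
    (X * upperUnipotent z * X⁻¹) 0 0 = 1 - X 0 0 * X 1 0 * z := by
  simp only [Matrix.SpecialLinearGroup.coe_mul, Matrix.SpecialLinearGroup.coe_inv,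
    coe_upperUnipotent, Matrix.adjugate_fin_two, Matrix.mul_apply, Fin.sum_univ_two,
    Matrix.of_apply, Matrix.cons_val', Matrix.cons_val_fin_one, Matrix.cons_val_zero,
    Matrix.cons_val_one]
  linear_combination det_fin_two_eq_one X

end SL2

section Conductor

variable {p c : ℕ} [Fact p.Prime] [NeZero (p ^ c)]

lemma exists_conj_upperUnipotent {X : SL(2, ZMod (p ^ c))} (hX : X 1 0 ≠ 0)
    {t : ZMod (p ^ c)} (ht : X 1 0 = p * t) (w : ZMod (p ^ c)) :
    ∃ z : ZMod (p ^ c), (X * upperUnipotent z * X⁻¹) 1 0 = 0 ∧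
      (X * upperUnipotent z * X⁻¹) 0 0 = 1 + p ^ (c - 1) * w := by
  obtain ⟨z₀, hz₀⟩ := exists_mul_eq_pow_pred hX
  have hα : IsUnit (X 0 0) := by
    refine isUnit_of_mul_isUnit_left (y := X 1 1) ?_
    rw [show X 0 0 * X 1 1 = 1 + p * (t * X 0 1) by
      linear_combination det_fin_two_eq_one X + X 0 1 * ht]
    exact isUnit_one_add_natCast_mul _
  obtain ⟨a, ha⟩ := hα.exists_right_inv
  refine ⟨-(a * w * z₀), ?_, ?_⟩
  · rw [conj_upperUnipotent_apply_one_zero]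
    linear_combination (X 1 0 * a * w) * hz₀ + (p ^ (c - 1) * a * w) * ht +
      (t * a * w) * natCast_mul_pow_pred_eq_zero
  · rw [conj_upperUnipotent_apply_zero_zero]
    linear_combination (X 0 0 * a * w) * hz₀ + (w * p ^ (c - 1)) * ha

end Conductor

section Statement11

open Matrix

theorem indChar_irreducible_general
    (p c : ℕ) [Fact p.Prime] [NeZero (p ^ c)]
    (ρ : (ZMod (p ^ c))ˣ →* ℂˣ)
    (hρ : ∃ x ∈ (ZMod.unitsMap (pow_dvd_pow p (Nat.sub_le c 1))).ker, ρ x ≠ 1)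
    (B Jsub : Subgroup (Matrix.SpecialLinearGroup (Fin 2) (ZMod (p ^ c))))
    (hB : (B : Set (Matrix.SpecialLinearGroup (Fin 2) (ZMod (p ^ c)))) =
      {g : Matrix.SpecialLinearGroup (Fin 2) (ZMod (p ^ c)) |
        (↑g : Matrix (Fin 2) (Fin 2) (ZMod (p ^ c))) 1 0 = 0})
    (hJ : (Jsub : Set (Matrix.SpecialLinearGroup (Fin 2) (ZMod (p ^ c)))) =
      {g : Matrix.SpecialLinearGroup (Fin 2) (ZMod (p ^ c)) | ∃ x : ZMod (p ^ c),
        (↑g : Matrix (Fin 2) (Fin 2) (ZMod (p ^ c))) 1 0 = (p : ZMod (p ^ c)) * x})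
    (hBJ : B ≤ Jsub)
    (ρh : ↥B →* ℂˣ)
    (hρh : ∀ (g : ↥B) (a : (ZMod (p ^ c))ˣ),
      (↑(↑g : Matrix.SpecialLinearGroup (Fin 2) (ZMod (p ^ c))) :
        Matrix (Fin 2) (Fin 2) (ZMod (p ^ c))) 0 0 = (a : ZMod (p ^ c)) → ρh g = ρ a) :
    IsIrreducibleSub (rtRep ↥Jsub ℂ)
      (indChar (B.subgroupOf Jsub)
        (ρh.comp (Subgroup.subgroupOfEquivOfLe hBJ).toMonoidHom)) := by
  have mem_B : ∀ g, g ∈ B ↔ g 1 0 = 0 := fun g => by rw [← SetLike.mem_coe, hB]; rfl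
  refine isIrreducibleSub_indChar fun x hx => ?_
  obtain ⟨u, hu, hρu⟩ := hρ
  obtain ⟨w, hw⟩ := exists_eq_one_add_mul_of_mem_ker_unitsMap _ hu
  rw [Nat.cast_pow] at hw
  obtain ⟨t, ht⟩ : ∃ t, (x : SL(2, ZMod (p ^ c))) 1 0 = p * t := by
    simpa [← SetLike.mem_coe, hJ] using x.2
  have hx0 : (x : SL(2, ZMod (p ^ c))) 1 0 ≠ 0 := fun h =>
    hx (Subgroup.mem_subgroupOf.mpr ((mem_B _).mpr h))
  obtain ⟨z, hz10, hz00⟩ := exists_conj_upperUnipotent hx0 ht w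
  have hb : upperUnipotent z ∈ B := (mem_B _).mpr rfl
  have hb' : x * upperUnipotent z * x⁻¹ ∈ B := (mem_B _).mpr hz10
  refine ⟨⟨⟨_, hBJ hb⟩, hb⟩, ⟨⟨_, hBJ hb'⟩, hb'⟩, Subtype.ext (inv_mul_cancel_right _ _), ?_⟩
  dsimp only [MonoidHom.comp_apply, MulEquiv.coe_toMonoidHom]
  rw [hρh _ u (hz00.trans hw.symm), hρh _ 1 rfl, map_one]
  exact hρu

/-- Let `ρ` be a character of `(ℤ/p^cℤ)ˣ` of conductor exactly `c` (nontrivial on the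
kernel of reduction to `(ℤ/p^{c-1}ℤ)ˣ`).  In the Iwahori subgroup `J` of
`SL₂(ℤ/p^cℤ)`, with `B` the upper-triangular subgroup and `ρ̂(g) = ρ(g₁₁)`, the induced
representation `Ind_B^J ρ̂` is irreducible. -/
theorem indChar_irreducible
    (p c : ℕ) [Fact p.Prime] [NeZero (p ^ c)] (hc : 1 ≤ c)
    (ρ : (ZMod (p ^ c))ˣ →* ℂˣ)
    (hρ : ∃ x ∈ (ZMod.unitsMap (pow_dvd_pow p (Nat.sub_le c 1))).ker, ρ x ≠ 1)
    (B Jsub : Subgroup (Matrix.SpecialLinearGroup (Fin 2) (ZMod (p ^ c))))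
    (hB : (B : Set (Matrix.SpecialLinearGroup (Fin 2) (ZMod (p ^ c)))) =
      {g : Matrix.SpecialLinearGroup (Fin 2) (ZMod (p ^ c)) |
        (↑g : Matrix (Fin 2) (Fin 2) (ZMod (p ^ c))) 1 0 = 0})
    (hJ : (Jsub : Set (Matrix.SpecialLinearGroup (Fin 2) (ZMod (p ^ c)))) =
      {g : Matrix.SpecialLinearGroup (Fin 2) (ZMod (p ^ c)) | ∃ x : ZMod (p ^ c),
        (↑g : Matrix (Fin 2) (Fin 2) (ZMod (p ^ c))) 1 0 = (p : ZMod (p ^ c)) * x})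
    (hBJ : B ≤ Jsub)
    (ρh : ↥B →* ℂˣ)
    (hρh : ∀ (g : ↥B) (a : (ZMod (p ^ c))ˣ),
      (↑(↑g : Matrix.SpecialLinearGroup (Fin 2) (ZMod (p ^ c))) :
        Matrix (Fin 2) (Fin 2) (ZMod (p ^ c))) 0 0 = (a : ZMod (p ^ c)) → ρh g = ρ a) :
    IsIrreducibleSub (rtRep ↥Jsub ℂ)
      (indChar (B.subgroupOf Jsub)
        (ρh.comp (Subgroup.subgroupOfEquivOfLe hBJ).toMonoidHom)) :=
  indChar_irreducible_general p c ρ hρ B Jsub hB hJ hBJ ρh hρh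

end Statement11


end Parahoric
end
end

section
/- Let (π, W) be a finite-dimensional complex representation of J. Then there is an isomorphism of L-representations (ℂ[G] ⊗_{ℂ[J]} W)^U ≅ W^U ⊕ (W^V)^w, where (ℂ[G] ⊗_{ℂ[J]} W)^U is the subspace of U-fixed vectors of the induced ℂ[G]-module (an L-subrepresentation since L normalizes U), W^U and W^V are the U- and V-fixed subspaces of W, and (W^V)^w is the space W^V with L acting by l · x := π(w l w⁻¹)x. -/
open scoped BigOperators

set_option maxHeartbeats 1000000
set_option synthInstance.maxHeartbeats 1000000

noncomputable section

namespace Parahoric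

variable {G : Type*} [Group G]

/-!
Every `g ∉ J` has unit lower-left entry and so lies in `U w⁻¹ J`; hence `G = J ⊔ U w⁻¹ J`, and a
left-`U`-invariant `f` in the induced module is determined by `f 1` and `f w⁻¹`. These lie in
`W^U` and in `W^V` (as `w⁻¹ V w ⊆ U`), and conversely every such pair extends, consistently
because `J ∩ w U w⁻¹ ⊆ V`. Evaluation at `1` and at `w⁻¹` intertwines the actions of `L` by
left translation, the second one twisted by `w` since `l⁻¹ w⁻¹ = w⁻¹ (w l w⁻¹)⁻¹`.
-/

section DoubleCosetExtension

variable {G : Type*} [Group G] {W : Type*} [AddCommGroup W] [Module ℂ W]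
  {J U V L : Subgroup G} {π : Representation ℂ ↥J W} {w : G}

lemma indUp_apply_mul_inv {f : G → W} (hf : f ∈ indUp J π) (g : G) (k : J) :
    f (g * (k : G)⁻¹) = π k (f g) := by
  simpa using hf g k⁻¹

lemma mem_fixedSub_ltRep_iff {f : G → W} :
    f ∈ fixedSub (ltRep G W) U ↔ ∀ u ∈ U, ∀ g, f (u * g) = f g := by
  refine ⟨fun hf u hu g => ?_, fun hf u hu => funext fun g => hf u⁻¹ (inv_mem hu) g⟩
  simpa [ltRep] using congrFun (hf u⁻¹ (inv_mem hu)) g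

lemma mem_fixedSub_comp_inclusion_iff (hUJ : U ≤ J) {x : W} :
    x ∈ fixedSub (π.comp (Subgroup.inclusion hUJ)) ⊤ ↔ ∀ j : J, (j : G) ∈ U → π j x = x :=
  ⟨fun hx j hj => hx ⟨j, hj⟩ trivial, fun hx u _ => hx _ u.2⟩

lemma apply_one_mem_fixedSub (hUJ : U ≤ J) {f : G → W}
    (hf : f ∈ indUp J π ⊓ fixedSub (ltRep G W) U) :
    f 1 ∈ fixedSub (π.comp (Subgroup.inclusion hUJ)) ⊤ := by
  obtain ⟨hind, hfix⟩ := hf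
  refine (mem_fixedSub_comp_inclusion_iff hUJ).2 fun j hj => ?_
  calc π j (f 1) = f ((j : G)⁻¹ * 1) := by rw [← indUp_apply_mul_inv hind, one_mul, mul_one]
    _ = f 1 := mem_fixedSub_ltRep_iff.1 hfix _ (inv_mem hj) 1

lemma apply_inv_mem_fixedSub (hVJ : V ≤ J) (hVU : ∀ v ∈ V, w⁻¹ * v * w ∈ U) {f : G → W}
    (hf : f ∈ indUp J π ⊓ fixedSub (ltRep G W) U) :
    f w⁻¹ ∈ fixedSub (π.comp (Subgroup.inclusion hVJ)) ⊤ := by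
  obtain ⟨hind, hfix⟩ := hf
  refine (mem_fixedSub_comp_inclusion_iff hVJ).2 fun j hj => ?_
  calc π j (f w⁻¹) = f ((w⁻¹ * (j : G)⁻¹ * w) * w⁻¹) := by
        rw [← indUp_apply_mul_inv hind]; group
    _ = f w⁻¹ := mem_fixedSub_ltRep_iff.1 hfix _ (hVU _ (inv_mem hj)) _

lemma eq_zero_of_apply_one_of_apply_inv (hcover : ∀ g ∉ J, ∃ j : J, ∃ u ∈ U, g = u * w⁻¹ * j)
    {f : G → W} (hf : f ∈ indUp J π ⊓ fixedSub (ltRep G W) U) (h1 : f 1 = 0) (hinv : f w⁻¹ = 0) :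
    f = 0 := by
  obtain ⟨hind, hfix⟩ := hf
  funext g
  by_cases hg : g ∈ J
  · simpa [h1] using hind 1 ⟨g, hg⟩
  · obtain ⟨j, u, hu, rfl⟩ := hcover g hg
    rw [mul_assoc, mem_fixedSub_ltRep_iff.1 hfix u hu, hind, hinv, map_zero, Pi.zero_apply]

variable (π w) in
open Classical in
/-- The function on `G = J ⊔ U w⁻¹ J` equal to `π(j)⁻¹ x` at `j` and to `π(j)⁻¹ y` at `u w⁻¹ j`;
for `y ∈ W^V` the latter does not depend on the decomposition chosen
(`extendDoubleCoset_apply_of_eq`). -/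
def extendDoubleCoset (hcover : ∀ g ∉ J, ∃ j : J, ∃ u ∈ U, g = u * w⁻¹ * j) (x y : W) :
    G → W :=
  fun g => if hg : g ∈ J then π ⟨g, hg⟩⁻¹ x else π (hcover g hg).choose⁻¹ y

lemma inv_apply_eq_of_mul_eq (hUV : ∀ u ∈ U, w * u * w⁻¹ ∈ J → w * u * w⁻¹ ∈ V) {y : W}
    (hy : ∀ k : J, (k : G) ∈ V → π k y = y) {u u' : G} (hu : u ∈ U) (hu' : u' ∈ U)
    {j j' : J} (h : u * w⁻¹ * j = u' * w⁻¹ * j') : π j⁻¹ y = π j'⁻¹ y := by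
  have hk : ((j' * j⁻¹ : J) : G) = w * (u'⁻¹ * u) * w⁻¹ := by
    calc ((j' * j⁻¹ : J) : G) = w * u'⁻¹ * (u' * w⁻¹ * j') * (j : G)⁻¹ := by
          simp only [Subgroup.coe_mul, Subgroup.coe_inv]; group
      _ = w * (u'⁻¹ * u) * w⁻¹ := by rw [← h]; group
  have hkV : ((j' * j⁻¹ : J) : G) ∈ V :=
    hk ▸ hUV _ (mul_mem (inv_mem hu') hu) (hk ▸ (j' * j⁻¹).2)
  calc π j⁻¹ y = π (j'⁻¹ * (j' * j⁻¹)) y := by rw [inv_mul_cancel_left]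
    _ = π j'⁻¹ y := by rw [map_mul, Module.End.mul_apply, hy _ hkV]

section Extension

variable {hcover : ∀ g ∉ J, ∃ j : J, ∃ u ∈ U, g = u * w⁻¹ * j} {x y : W}

lemma extendDoubleCoset_apply_of_mem {g : G} (hg : g ∈ J) :
    extendDoubleCoset π w hcover x y g = π ⟨g, hg⟩⁻¹ x :=
  dif_pos hg

lemma extendDoubleCoset_apply_of_eq (hUV : ∀ u ∈ U, w * u * w⁻¹ ∈ J → w * u * w⁻¹ ∈ V)
    (hy : ∀ k : J, (k : G) ∈ V → π k y = y) {g u : G} (hg : g ∉ J) (hu : u ∈ U) {j : J}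
    (h : g = u * w⁻¹ * j) : extendDoubleCoset π w hcover x y g = π j⁻¹ y := by
  obtain ⟨u₀, hu₀, h₀⟩ := (hcover g hg).choose_spec
  rw [extendDoubleCoset, dif_neg hg]
  exact inv_apply_eq_of_mul_eq hUV hy hu₀ hu (h₀.symm.trans h)

lemma extendDoubleCoset_mem (hUJ : U ≤ J) (hUV : ∀ u ∈ U, w * u * w⁻¹ ∈ J → w * u * w⁻¹ ∈ V)
    (hx : ∀ k : J, (k : G) ∈ U → π k x = x) (hy : ∀ k : J, (k : G) ∈ V → π k y = y) :
    extendDoubleCoset π w hcover x y ∈ indUp J π ⊓ fixedSub (ltRep G W) U := by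
  refine ⟨fun g k => ?_, mem_fixedSub_ltRep_iff.2 fun u' hu' g => ?_⟩
  · by_cases hg : g ∈ J
    · rw [extendDoubleCoset_apply_of_mem (mul_mem hg k.2), extendDoubleCoset_apply_of_mem hg,
        ← Module.End.mul_apply, ← map_mul, ← mul_inv_rev]
      rfl
    · obtain ⟨j, u, hu, rfl⟩ := hcover g hg
      have hgk : u * w⁻¹ * ↑j * ↑k ∉ J := fun h => hg (by simpa using mul_mem h (inv_mem k.2))
      rw [extendDoubleCoset_apply_of_eq hUV hy hgk hu (j := j * k) (by simp [mul_assoc]),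
        extendDoubleCoset_apply_of_eq hUV hy hg hu rfl, mul_inv_rev, map_mul,
        Module.End.mul_apply]
  · by_cases hg : g ∈ J
    · rw [extendDoubleCoset_apply_of_mem (mul_mem (hUJ hu') hg),
        extendDoubleCoset_apply_of_mem hg,
        show (⟨u' * g, _⟩ : J) = ⟨u', hUJ hu'⟩ * ⟨g, hg⟩ from rfl, mul_inv_rev, map_mul,
        Module.End.mul_apply, hx _ (inv_mem hu')]
    · obtain ⟨j, u, hu, rfl⟩ := hcover g hg
      have hug : u' * (u * w⁻¹ * j) ∉ J := fun h =>
        hg (by simpa using mul_mem (inv_mem (hUJ hu')) h)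
      rw [extendDoubleCoset_apply_of_eq hUV hy hug (mul_mem hu' hu) (j := j) (by group),
        extendDoubleCoset_apply_of_eq hUV hy hg hu rfl]

lemma extendDoubleCoset_apply_one : extendDoubleCoset π w hcover x y 1 = x := by
  rw [extendDoubleCoset_apply_of_mem J.one_mem, show (⟨1, _⟩ : J) = 1 from rfl, inv_one, map_one,
    Module.End.one_apply]

lemma extendDoubleCoset_apply_inv (hUV : ∀ u ∈ U, w * u * w⁻¹ ∈ J → w * u * w⁻¹ ∈ V)
    (hy : ∀ k : J, (k : G) ∈ V → π k y = y) (hwJ : w⁻¹ ∉ J) :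
    extendDoubleCoset π w hcover x y w⁻¹ = y := by
  rw [extendDoubleCoset_apply_of_eq hUV hy hwJ U.one_mem (j := 1) (by simp), inv_one, map_one,
    Module.End.one_apply]

end Extension

theorem isoSubSub_indUp_inf_fixedSub (hUJ : U ≤ J) (hVJ : V ≤ J) (hLJ : L ≤ J)
    (hwL : ∀ l ∈ L, w * l * w⁻¹ ∈ L)
    (hcover : ∀ g ∉ J, ∃ j : J, ∃ u ∈ U, g = u * w⁻¹ * j) (hwJ : w⁻¹ ∉ J)
    (hVU : ∀ v ∈ V, w⁻¹ * v * w ∈ U) (hUV : ∀ u ∈ U, w * u * w⁻¹ ∈ J → w * u * w⁻¹ ∈ V) :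
    IsoSubSub ((ltRep G W).comp L.subtype) (indUp J π ⊓ fixedSub (ltRep G W) U)
      (pairRep (π.comp (Subgroup.inclusion hLJ))
        ((π.comp (Subgroup.inclusion hLJ)).comp (conjHom L w hwL)))
      ((fixedSub (π.comp (Subgroup.inclusion hUJ)) ⊤).prod
        (fixedSub (π.comp (Subgroup.inclusion hVJ)) ⊤)) := by
  let eval := (((LinearMap.proj 1).prod (LinearMap.proj w⁻¹)) ∘ₗ
      (indUp J π ⊓ fixedSub (ltRep G W) U).subtype).codRestrict
    ((fixedSub (π.comp (Subgroup.inclusion hUJ)) ⊤).prod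
      (fixedSub (π.comp (Subgroup.inclusion hVJ)) ⊤))
    fun f => ⟨apply_one_mem_fixedSub hUJ f.2, apply_inv_mem_fixedSub hVJ hVU f.2⟩
  have hinj : Function.Injective eval := by
    refine (injective_iff_map_eq_zero eval).2 fun f hf => ?_
    have h := congrArg Subtype.val hf
    exact Subtype.ext (eq_zero_of_apply_one_of_apply_inv hcover f.2
      (congrArg Prod.fst h) (congrArg Prod.snd h))
  have hsurj : Function.Surjective eval := by
    rintro ⟨⟨x, y⟩, hxy⟩
    obtain ⟨hx, hy⟩ := Submodule.mem_prod.1 hxy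
    replace hx := (mem_fixedSub_comp_inclusion_iff hUJ).1 hx
    replace hy := (mem_fixedSub_comp_inclusion_iff hVJ).1 hy
    exact ⟨⟨extendDoubleCoset π w hcover x y, extendDoubleCoset_mem hUJ hUV hx hy⟩,
      Subtype.ext <| Prod.ext extendDoubleCoset_apply_one
        (extendDoubleCoset_apply_inv hUV hy hwJ)⟩
  refine ⟨LinearEquiv.ofBijective eval ⟨hinj, hsurj⟩, fun l f _ => Prod.ext ?_ ?_⟩
  · show (f : G → W) ((l : G)⁻¹ * 1) = π ⟨l, hLJ l.2⟩ ((f : G → W) 1)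
    rw [← indUp_apply_mul_inv f.2.1, one_mul, mul_one]
  · show (f : G → W) ((l : G)⁻¹ * w⁻¹) = π ⟨w * l * w⁻¹, hLJ (hwL l l.2)⟩ ((f : G → W) w⁻¹)
    rw [← indUp_apply_mul_inv f.2.1]
    group

end DoubleCosetExtension

lemma ZMod.isUnit_or_natCast_dvd_of_prime_pow {p n : ℕ} (hp : p.Prime) (hn : 0 < n)
    (a : ZMod (p ^ n)) : IsUnit a ∨ (p : ZMod (p ^ n)) ∣ a := by
  have : NeZero (p ^ n) := ⟨pow_ne_zero n hp.ne_zero⟩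
  obtain ⟨m, rfl⟩ := ZMod.natCast_zmod_surjective a
  by_cases hm : p ∣ m
  · exact Or.inr (Nat.cast_dvd_cast hm)
  · exact Or.inl ((ZMod.isUnit_natCast_iff_not_dvd_pow hp hn).2 hm)

namespace SL2

open Matrix

variable {R : Type*} [CommRing R]

def upperUnipotent (R : Type*) [CommRing R] : Set (SpecialLinearGroup (Fin 2) R) :=
  {g | ∃ b, (g : Matrix (Fin 2) (Fin 2) R) = !![1, b; 0, 1]}

def lowerUnipotent (ϖ : R) : Set (SpecialLinearGroup (Fin 2) R) :=
  {g | ∃ c, (∃ c', c = ϖ * c') ∧ (g : Matrix (Fin 2) (Fin 2) R) = !![1, 0; c, 1]}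

def iwahori (ϖ : R) : Set (SpecialLinearGroup (Fin 2) R) :=
  {g | ∃ x, (g : Matrix (Fin 2) (Fin 2) R) 1 0 = ϖ * x}

variable {ϖ : R} {U V J : Subgroup (SpecialLinearGroup (Fin 2) R)}
  {w : SpecialLinearGroup (Fin 2) R}

lemma coe_weyl_inv (hw : (w : Matrix (Fin 2) (Fin 2) R) = !![0, -1; 1, 0]) :
    ((w⁻¹ : SpecialLinearGroup (Fin 2) R) : Matrix (Fin 2) (Fin 2) R) = !![0, 1; -1, 0] := by
  simp [hw, adjugate_fin_two_of]

lemma weyl_inv_not_mem (hJ : (J : Set (SpecialLinearGroup (Fin 2) R)) = iwahori ϖ)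
    (hw : (w : Matrix (Fin 2) (Fin 2) R) = !![0, -1; 1, 0]) (hϖ : ¬IsUnit ϖ) : w⁻¹ ∉ J := by
  rw [← SetLike.mem_coe, hJ]
  rintro ⟨x, hx⟩
  rw [coe_weyl_inv hw] at hx
  exact hϖ (isUnit_of_dvd_unit ⟨x, by simpa using hx⟩ isUnit_one.neg)

lemma weyl_inv_conj_mem_of_mem (hU : (U : Set (SpecialLinearGroup (Fin 2) R)) = upperUnipotent R)
    (hV : (V : Set (SpecialLinearGroup (Fin 2) R)) = lowerUnipotent ϖ)
    (hw : (w : Matrix (Fin 2) (Fin 2) R) = !![0, -1; 1, 0]) {v : SpecialLinearGroup (Fin 2) R}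
    (hv : v ∈ V) : w⁻¹ * v * w ∈ U := by
  rw [← SetLike.mem_coe, hV] at hv
  obtain ⟨c, -, hc⟩ := hv
  rw [← SetLike.mem_coe, hU]
  exact ⟨-c, by simp [coe_weyl_inv hw, hw, hc]⟩

lemma weyl_conj_mem_of_mem (hU : (U : Set (SpecialLinearGroup (Fin 2) R)) = upperUnipotent R)
    (hV : (V : Set (SpecialLinearGroup (Fin 2) R)) = lowerUnipotent ϖ)
    (hJ : (J : Set (SpecialLinearGroup (Fin 2) R)) = iwahori ϖ)
    (hw : (w : Matrix (Fin 2) (Fin 2) R) = !![0, -1; 1, 0]) {u : SpecialLinearGroup (Fin 2) R}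
    (hu : u ∈ U) (huJ : w * u * w⁻¹ ∈ J) : w * u * w⁻¹ ∈ V := by
  rw [← SetLike.mem_coe, hU] at hu
  obtain ⟨b, hb⟩ := hu
  have hconj : ((w * u * w⁻¹ : SpecialLinearGroup (Fin 2) R) : Matrix (Fin 2) (Fin 2) R) =
      !![1, 0; -b, 1] := by
    simp [coe_weyl_inv hw, hw, hb]
  rw [← SetLike.mem_coe, hJ] at huJ
  obtain ⟨x, hx⟩ := huJ
  rw [← SetLike.mem_coe, hV]
  exact ⟨-b, ⟨x, by simpa [hconj] using hx⟩, hconj⟩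

lemma exists_eq_mul_weyl_inv_mul_of_not_mem
    (hU : (U : Set (SpecialLinearGroup (Fin 2) R)) = upperUnipotent R)
    (hJ : (J : Set (SpecialLinearGroup (Fin 2) R)) = iwahori ϖ)
    (hw : (w : Matrix (Fin 2) (Fin 2) R) = !![0, -1; 1, 0]) (hloc : ∀ a : R, IsUnit a ∨ ϖ ∣ a)
    {g : SpecialLinearGroup (Fin 2) R} (hg : g ∉ J) : ∃ j : J, ∃ u ∈ U, g = u * w⁻¹ * j := by
  have hunit : IsUnit ((g : Matrix (Fin 2) (Fin 2) R) 1 0) :=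
    (hloc _).resolve_right fun h => hg (by rw [← SetLike.mem_coe, hJ]; exact h)
  obtain ⟨a, ha⟩ := hunit
  let u : SpecialLinearGroup (Fin 2) R :=
    ⟨!![1, -((g : Matrix (Fin 2) (Fin 2) R) 0 0 * ↑a⁻¹); 0, 1], by simp [det_fin_two_of]⟩
  have hu_coe : (u : Matrix (Fin 2) (Fin 2) R) =
      !![1, -((g : Matrix (Fin 2) (Fin 2) R) 0 0 * ↑a⁻¹); 0, 1] := rfl
  have hu : u ∈ U := by
    rw [← SetLike.mem_coe, hU]
    exact ⟨_, hu_coe⟩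
  have hj : w * u * g ∈ J := by
    rw [← SetLike.mem_coe, hJ]
    refine ⟨0, ?_⟩
    simp [hu_coe, hw, Matrix.mul_apply, Fin.sum_univ_two, ← ha]
  exact ⟨⟨_, hj⟩, u⁻¹, inv_mem hu, by group⟩

end SL2

section Statement18

open Matrix

theorem sl2_induced_U_fixed_vectors_general
    (p n : ℕ) [Fact p.Prime] (hn : 1 ≤ n)
    (U L V Jsub : Subgroup (Matrix.SpecialLinearGroup (Fin 2) (ZMod (p ^ n))))
    (hU : (U : Set (Matrix.SpecialLinearGroup (Fin 2) (ZMod (p ^ n)))) =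
      {g : Matrix.SpecialLinearGroup (Fin 2) (ZMod (p ^ n)) | ∃ b : ZMod (p ^ n),
        (↑g : Matrix (Fin 2) (Fin 2) (ZMod (p ^ n))) = !![1, b; 0, 1]})
    (hV : (V : Set (Matrix.SpecialLinearGroup (Fin 2) (ZMod (p ^ n)))) =
      {g : Matrix.SpecialLinearGroup (Fin 2) (ZMod (p ^ n)) | ∃ c : ZMod (p ^ n),
        (∃ c' : ZMod (p ^ n), c = (p : ZMod (p ^ n)) * c') ∧
        (↑g : Matrix (Fin 2) (Fin 2) (ZMod (p ^ n))) = !![1, 0; c, 1]})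
    (hJ : (Jsub : Set (Matrix.SpecialLinearGroup (Fin 2) (ZMod (p ^ n)))) =
      {g : Matrix.SpecialLinearGroup (Fin 2) (ZMod (p ^ n)) | ∃ x : ZMod (p ^ n),
        (↑g : Matrix (Fin 2) (Fin 2) (ZMod (p ^ n))) 1 0 = (p : ZMod (p ^ n)) * x})
    (w : Matrix.SpecialLinearGroup (Fin 2) (ZMod (p ^ n)))
    (hw : (↑w : Matrix (Fin 2) (Fin 2) (ZMod (p ^ n))) = !![0, -1; 1, 0])
    (hwL : ∀ l ∈ L, w * l * w⁻¹ ∈ L)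
    (hUJ : U ≤ Jsub) (hVJ : V ≤ Jsub) (hLJ : L ≤ Jsub)
    {W : Type*} [AddCommGroup W] [Module ℂ W]
    (π : Representation ℂ ↥Jsub W) :
    IsoSubSub
      ((ltRep (Matrix.SpecialLinearGroup (Fin 2) (ZMod (p ^ n))) W).comp L.subtype)
      (indUp Jsub π ⊓
        fixedSub (ltRep (Matrix.SpecialLinearGroup (Fin 2) (ZMod (p ^ n))) W) U)
      (pairRep (π.comp (Subgroup.inclusion hLJ))
        ((π.comp (Subgroup.inclusion hLJ)).comp (conjHom L w hwL)))
      ((fixedSub (π.comp (Subgroup.inclusion hUJ)) ⊤).prod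
        (fixedSub (π.comp (Subgroup.inclusion hVJ)) ⊤)) := by
  have hp : p.Prime := Fact.out
  exact isoSubSub_indUp_inf_fixedSub hUJ hVJ hLJ hwL
    (fun _ hg => SL2.exists_eq_mul_weyl_inv_mul_of_not_mem hU hJ hw
      (ZMod.isUnit_or_natCast_dvd_of_prime_pow hp hn) hg)
    (SL2.weyl_inv_not_mem hJ hw (ZMod.prime_natCast_not_isUnit_pow hp hn))
    (fun _ => SL2.weyl_inv_conj_mem_of_mem hU hV hw)
    (fun _ => SL2.weyl_conj_mem_of_mem hU hV hJ hw)

/-- In `G = SL₂(ℤ/pⁿℤ)` with Iwahori subgroup `J = ULV` and Weyl element `w`, for every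
finite-dimensional representation `(π, W)` of `J` there is an isomorphism of
`L`-representations `(ℂ[G] ⊗_{ℂ[J]} W)^U ≅ W^U ⊕ (W^V)^w`, where the second summand is
`W^V` with `L` acting through conjugation by `w`. -/
theorem sl2_induced_U_fixed_vectors
    (p n : ℕ) [Fact p.Prime] [NeZero (p ^ n)] (hn : 1 ≤ n)
    (U L V Jsub : Subgroup (Matrix.SpecialLinearGroup (Fin 2) (ZMod (p ^ n))))
    (hU : (U : Set (Matrix.SpecialLinearGroup (Fin 2) (ZMod (p ^ n)))) =
      {g : Matrix.SpecialLinearGroup (Fin 2) (ZMod (p ^ n)) | ∃ b : ZMod (p ^ n),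
        (↑g : Matrix (Fin 2) (Fin 2) (ZMod (p ^ n))) = !![1, b; 0, 1]})
    (hL : (L : Set (Matrix.SpecialLinearGroup (Fin 2) (ZMod (p ^ n)))) =
      {g : Matrix.SpecialLinearGroup (Fin 2) (ZMod (p ^ n)) | ∃ a : (ZMod (p ^ n))ˣ,
        (↑g : Matrix (Fin 2) (Fin 2) (ZMod (p ^ n))) =
          !![(a : ZMod (p ^ n)), 0; 0, ((a⁻¹ : (ZMod (p ^ n))ˣ) : ZMod (p ^ n))]})
    (hV : (V : Set (Matrix.SpecialLinearGroup (Fin 2) (ZMod (p ^ n)))) =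
      {g : Matrix.SpecialLinearGroup (Fin 2) (ZMod (p ^ n)) | ∃ c : ZMod (p ^ n),
        (∃ c' : ZMod (p ^ n), c = (p : ZMod (p ^ n)) * c') ∧
        (↑g : Matrix (Fin 2) (Fin 2) (ZMod (p ^ n))) = !![1, 0; c, 1]})
    (hJ : (Jsub : Set (Matrix.SpecialLinearGroup (Fin 2) (ZMod (p ^ n)))) =
      {g : Matrix.SpecialLinearGroup (Fin 2) (ZMod (p ^ n)) | ∃ x : ZMod (p ^ n),
        (↑g : Matrix (Fin 2) (Fin 2) (ZMod (p ^ n))) 1 0 = (p : ZMod (p ^ n)) * x})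
    (hIw : IwahoriDecomp Jsub U L V)
    (w : Matrix.SpecialLinearGroup (Fin 2) (ZMod (p ^ n)))
    (hw : (↑w : Matrix (Fin 2) (Fin 2) (ZMod (p ^ n))) = !![0, -1; 1, 0])
    (hwL : ∀ l ∈ L, w * l * w⁻¹ ∈ L)
    (hUJ : U ≤ Jsub) (hVJ : V ≤ Jsub) (hLJ : L ≤ Jsub)
    {W : Type*} [AddCommGroup W] [Module ℂ W] [FiniteDimensional ℂ W]
    (π : Representation ℂ ↥Jsub W) :
    IsoSubSub
      ((ltRep (Matrix.SpecialLinearGroup (Fin 2) (ZMod (p ^ n))) W).comp L.subtype)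
      (indUp Jsub π ⊓
        fixedSub (ltRep (Matrix.SpecialLinearGroup (Fin 2) (ZMod (p ^ n))) W) U)
      (pairRep (π.comp (Subgroup.inclusion hLJ))
        ((π.comp (Subgroup.inclusion hLJ)).comp (conjHom L w hwL)))
      ((fixedSub (π.comp (Subgroup.inclusion hUJ)) ⊤).prod
        (fixedSub (π.comp (Subgroup.inclusion hVJ)) ⊤)) :=
  sl2_induced_U_fixed_vectors_general p n hn U L V Jsub hU hV hJ w hw hwL hUJ hVJ hLJ π

end Statement18

end Parahoric
end
end
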